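/- (Noise-accumulation representation after consensus.) Let n ≥ 2, ε > 0, and let (ξ(t))_{t≥1} be any real sequence with |ξ(t)| ≤ δ2 ≤ ε for all t. Suppose the opinions evolve by the noisy HK update and d_V(0) = max_{i,j} |x_i(0) − x_j(0)| ≤ ε. Then for every t ≥ 0 and every agent i, x_i(t+1) = (1/n)·∑_{j=1}^n x_j(0) + (1/n)·∑_{k=1}^{t} ξ(k) + 1_{{i=1}}·ξ(t+1). -/

import Mathlib

/-- Neighbor set of agent `i` in the Hegselmann–Krause model with confidence threshold `ε`. -/
noncomputable def hkNbr {n : ℕ} (ε : ℝ) (x : Fin n → ℝ) (i : Fin n) : Finset (Fin n) :=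
  Finset.univ.filter fun j => |x j - x i| ≤ ε

/-- Noisy HK update: agent `1` (index `0`) additionally receives the noise `ξ`. -/
noncomputable def hkStep {n : ℕ} (ε : ℝ) (x : Fin n → ℝ) (ξ : ℝ) (i : Fin n) : ℝ :=
  (∑ j ∈ hkNbr ε x i, x j) / ((hkNbr ε x i).card : ℝ) + (if (i : ℕ) = 0 then ξ else 0)

/-!
Once all opinions lie within `ε` of each other, every agent hears every other one, so the
update replaces each opinion by the common mean and then adds the noise to agent `1` alone.
The resulting profile is a constant plus `ξ(t+1)` at agent `1`; its spread is `|ξ(t+1)| ≤ ε`,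
so consensus persists, and the next mean is the old one shifted by `ξ(t+1)/n`.
-/

open Finset

lemma hkNbr_eq_univ {n : ℕ} {ε : ℝ} {y : Fin n → ℝ} {i : Fin n}
    (h : ∀ j, |y j - y i| ≤ ε) : hkNbr ε y i = univ := by
  ext j
  simp [hkNbr, h j]

lemma hkStep_of_abs_sub_le {n : ℕ} {ε : ℝ} {y : Fin n → ℝ} (h : ∀ i j, |y i - y j| ≤ ε)
    (ξ : ℝ) (i : Fin n) :
    hkStep ε y ξ i = (∑ j, y j) / n + if (i : ℕ) = 0 then ξ else 0 := by
  simp [hkStep, hkNbr_eq_univ fun j => h j i]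

lemma Fin.sum_ite_val_eq_zero {M : Type*} [AddCommMonoid M] {n : ℕ} (hn : 0 < n) (a : M) :
    (∑ j : Fin n, if (j : ℕ) = 0 then a else 0) = a := by
  simp_rw [← Fin.ext_iff (b := ⟨0, hn⟩)]
  simp

lemma abs_sub_le_of_eq_add_ite {n : ℕ} {y : Fin n → ℝ} {c a : ℝ}
    (hy : ∀ i, y i = c + if (i : ℕ) = 0 then a else 0) (i j : Fin n) :
    |y i - y j| ≤ |a| := by
  rw [hy i, hy j]
  split_ifs <;> simp [abs_neg]

lemma hkStep_of_eq_add_ite {n : ℕ} {ε c a : ℝ} {y : Fin n → ℝ}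
    (hy : ∀ i, y i = c + if (i : ℕ) = 0 then a else 0) (ha : |a| ≤ ε) (ξ : ℝ) (i : Fin n) :
    hkStep ε y ξ i = c + a / n + if (i : ℕ) = 0 then ξ else 0 := by
  have hn : 0 < n := i.pos
  have hsum : ∑ j, y j = n * c + a := by
    simp_rw [hy, sum_add_distrib, Fin.sum_ite_val_eq_zero hn, sum_const, card_univ,
      Fintype.card_fin, nsmul_eq_mul]
  rw [hkStep_of_abs_sub_le (fun i j => (abs_sub_le_of_eq_add_ite hy i j).trans ha), hsum]
  field_simp

theorem hk_noise_accumulation_general (n : ℕ) (ε δ2 : ℝ)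
    (hδ2 : δ2 ≤ ε)
    (ξ : ℕ → ℝ) (hξ : ∀ t, 1 ≤ t → |ξ t| ≤ δ2)
    (x : ℕ → Fin n → ℝ)
    (hupd : ∀ t i, x (t + 1) i = hkStep ε (x t) (ξ (t + 1)) i)
    (hd0 : ∀ i j, |x 0 i - x 0 j| ≤ ε) :
    ∀ t i, x (t + 1) i
      = (∑ j, x 0 j) / (n : ℝ) + (∑ k ∈ Finset.Icc 1 t, ξ k) / (n : ℝ)
        + (if (i : ℕ) = 0 then ξ (t + 1) else 0) := by
  intro t
  induction t with
  | zero =>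
    intro i
    simp [hupd 0 i, hkStep_of_abs_sub_le hd0]
  | succ t ih =>
    intro i
    rw [hupd, hkStep_of_eq_add_ite ih ((hξ _ le_add_self).trans hδ2),
      sum_Icc_succ_top (by omega)]
    ring

/-- Noise-accumulation representation after consensus: if initially all opinions are within
`ε` of each other and `|ξ(t)| ≤ δ2 ≤ ε`, then
`x_i(t+1) = (1/n) ∑_j x_j(0) + (1/n) ∑_{k=1}^t ξ(k) + 1_{i=1} ξ(t+1)`. -/
theorem hk_noise_accumulation (n : ℕ) (hn : 2 ≤ n) (ε δ2 : ℝ) (hε : 0 < ε)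
    (hδ2 : δ2 ≤ ε)
    (ξ : ℕ → ℝ) (hξ : ∀ t, 1 ≤ t → |ξ t| ≤ δ2)
    (x : ℕ → Fin n → ℝ)
    (hupd : ∀ t i, x (t + 1) i = hkStep ε (x t) (ξ (t + 1)) i)
    (hd0 : ∀ i j, |x 0 i - x 0 j| ≤ ε) :
    ∀ t i, x (t + 1) i
      = (∑ j, x 0 j) / (n : ℝ) + (∑ k ∈ Finset.Icc 1 t, ξ k) / (n : ℝ)
        + (if (i : ℕ) = 0 then ξ (t + 1) else 0) :=
  hk_noise_accumulation_general n ε δ2 hδ2 ξ hξ x hupd hd0
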